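/- Every element of ker φ lying in the subring K[x₁,…,xₙ,y₁,…,y_{n−1}] (i.e., not involving yₙ) belongs to the ideal of K[x₁,…,xₙ,y₁,…,y_{n−1}] generated by F₁, …, F_{n−1}; that is, ker φ ∩ K[x₁,…,xₙ,y₁,…,y_{n−1}] = (F₁,…,F_{n−1}). -/

import Mathlib

/-!
Restricted to `K[x₁,…,xₙ,y₁,…,y_{n-1}]`, `φ` is the monomial map `xⱼ ↦ uⱼ^N`,
`yᵢ ↦ uᵢ^M uₙ^M` with `N = fg`, `M = f - g`, which are coprime. It sends the monomial with
exponent `s` to the monomial with exponent `T s` for an `ℕ`-linear `T`. Modulo the binomials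
`Fᵢ = yᵢ^N - xᵢ^M xₙ^M` every monomial is congruent to one whose `y`-exponents are `< N`. On
such exponents `T` is injective: the `uᵢ`-exponent `N a + M b` of `T s` determines `b < N`
modulo `N` because `M` is a unit there, then `a`, and finally the `xₙ`-exponent. Hence `φ` is
injective on the span of the reduced monomials, and an element of the kernel is congruent to
a reduced polynomial in the kernel, which must be `0`.
-/

open MvPolynomial

namespace MvPolynomial

variable {σ τ ι R : Type*}

theorem aeval_monomial_eq_monomial_linearCombination [CommSemiring R] (e : σ → τ →₀ ℕ)
    (s : σ →₀ ℕ) (c : R) :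
    aeval (fun v => monomial (e v) (1 : R)) (monomial s c) =
      monomial (Finsupp.linearCombination ℕ e s) c := by
  rw [aeval_monomial, Finsupp.linearCombination_apply, monomial_finsupp_sum_index]
  simp [monomial_pow, C_mul']

theorem eq_zero_of_aeval_monomial_eq_zero [CommSemiring R] (e : σ → τ →₀ ℕ)
    {S : Set (σ →₀ ℕ)} (hS : Set.InjOn (Finsupp.linearCombination ℕ e) S)
    {p : MvPolynomial σ R} (hp : p ∈ restrictSupport R S)
    (h : aeval (fun v => monomial (e v) (1 : R)) p = 0) : p = 0 := by
  classical
  rw [mem_restrictSupport_iff] at hp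
  ext s
  by_contra hs
  have hcoeff : coeff (Finsupp.linearCombination ℕ e s)
      (aeval (fun v => monomial (e v) (1 : R)) p) = coeff s p := by
    conv_lhs => rw [← support_sum_monomial_coeff p]
    simp only [map_sum, aeval_monomial_eq_monomial_linearCombination, coeff_sum, coeff_monomial]
    rw [Finset.sum_eq_single s]
    · simp
    · intro t ht hts
      rw [if_neg (fun h => hts (hS (hp ht) (hp (mem_support_iff.mpr hs)) h))]
    · exact fun hs' => absurd (mem_support_iff.mpr hs) hs'
  rw [h, coeff_zero] at hcoeff
  rw [coeff_zero] at hs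
  exact hs hcoeff.symm

theorem exists_sub_mem_restrictSupport [CommRing R] {I : Ideal (MvPolynomial σ R)}
    {S : Set (σ →₀ ℕ)} (hI : ∀ s, ∃ s' ∈ S, monomial s (1 : R) - monomial s' 1 ∈ I)
    (p : MvPolynomial σ R) : ∃ q ∈ restrictSupport R S, p - q ∈ I := by
  induction p using MvPolynomial.induction_on' with
  | monomial s c =>
    obtain ⟨s', hs', hss'⟩ := hI s
    refine ⟨monomial s' c, (monomial_mem_restrictSupport R).mpr (.inl hs'), ?_⟩
    simpa [mul_sub, C_mul_monomial] using I.mul_mem_left (C c) hss'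
  | add p q hp hq =>
    obtain ⟨p', hp', hpp'⟩ := hp
    obtain ⟨q', hq', hqq'⟩ := hq
    refine ⟨p' + q', add_mem hp' hq', ?_⟩
    convert I.add_mem hpp' hqq' using 1
    abel

theorem monomial_add_sum_nsmul_sub_mem [CommRing R] {I : Ideal (MvPolynomial σ R)}
    (w b : ι → σ →₀ ℕ) (hwb : ∀ i, monomial (w i) (1 : R) - monomial (b i) 1 ∈ I)
    (r : σ →₀ ℕ) (q : ι → ℕ) (t : Finset ι) :
    monomial (r + ∑ i ∈ t, q i • w i) (1 : R) -
      monomial (r + ∑ i ∈ t, q i • b i) 1 ∈ I := by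
  rw [← Ideal.Quotient.eq]
  have hwb' : ∀ i, Ideal.Quotient.mk I (monomial (w i) 1) =
      Ideal.Quotient.mk I (monomial (b i) 1) := fun i => Ideal.Quotient.eq.mpr (hwb i)
  have hsplit : ∀ x, monomial (r + x) (1 : R) = monomial r 1 * monomial x 1 := fun x => by
    rw [monomial_mul, one_mul]
  have hpow : ∀ (k : ℕ) (x : σ →₀ ℕ), monomial (k • x) (1 : R) = monomial x 1 ^ k :=
    fun k x => by rw [monomial_pow, one_pow]
  simp only [hsplit, monomial_sum_index, hpow, map_mul, map_prod, map_pow, hwb']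

end MvPolynomial

namespace Nat

theorem eq_of_mul_add_mul_eq_of_coprime {N M a a' b b' : ℕ} (hMN : M.Coprime N)
    (hb : b < N) (hb' : b' < N) (h : N * a + M * b = N * a' + M * b') : b = b' := by
  have hmod : M * b ≡ M * b' [MOD N] := by
    simpa [Nat.ModEq, Nat.mul_add_mod] using congrArg (· % N) h
  exact (Nat.ModEq.cancel_left_of_coprime hMN.symm hmod).eq_of_lt_of_lt hb hb'

end Nat

namespace ToricKernel

open Finsupp (linearCombination single)

variable (K : Type*) [Field K] (N M m : ℕ)

noncomputable def toricExponent : Fin (m + 1) ⊕ Fin m → Fin (m + 1) →₀ ℕ :=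
  Sum.elim (fun j => single j N) (fun i => single i.castSucc M + single (Fin.last m) M)

noncomputable def toricHom :
    MvPolynomial (Fin (m + 1) ⊕ Fin m) K →ₐ[K] MvPolynomial (Fin (m + 1)) K :=
  aeval fun v => monomial (toricExponent N M m v) 1

noncomputable def binomialIdeal : Ideal (MvPolynomial (Fin (m + 1) ⊕ Fin m) K) :=
  Ideal.span (Set.range fun i : Fin m =>
    X (Sum.inr i) ^ N - X (Sum.inl i.castSucc) ^ M * X (Sum.inl (Fin.last m)) ^ M)

def reducedExponents : Set ((Fin (m + 1) ⊕ Fin m) →₀ ℕ) := {s | ∀ i, s (Sum.inr i) < N}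

variable {K N M m}

theorem toricHom_X_inl (j : Fin (m + 1)) : toricHom K N M m (X (Sum.inl j)) = X j ^ N := by
  simp [toricHom, toricExponent, X_pow_eq_monomial]

theorem toricHom_X_inr (i : Fin m) :
    toricHom K N M m (X (Sum.inr i)) = X i.castSucc ^ M * X (Fin.last m) ^ M := by
  simp [toricHom, toricExponent, X_pow_eq_monomial, monomial_mul]

theorem binomialIdeal_le_ker : binomialIdeal K N M m ≤ RingHom.ker (toricHom K N M m) := by
  rw [binomialIdeal, Ideal.span_le]
  rintro _ ⟨i, rfl⟩
  simp [toricHom_X_inl, toricHom_X_inr, mul_pow, ← pow_mul, mul_comm]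

theorem linearCombination_toricExponent_castSucc (s : (Fin (m + 1) ⊕ Fin m) →₀ ℕ)
    (i : Fin m) :
    linearCombination ℕ (toricExponent N M m) s i.castSucc =
      N * s (Sum.inl i.castSucc) + M * s (Sum.inr i) := by
  simp [Finsupp.linearCombination_apply, Finsupp.sum_fintype, Fintype.sum_sum_type, toricExponent,
    Finsupp.single_apply, mul_comm]

theorem linearCombination_toricExponent_last (s : (Fin (m + 1) ⊕ Fin m) →₀ ℕ) :
    linearCombination ℕ (toricExponent N M m) s (Fin.last m) =
      N * s (Sum.inl (Fin.last m)) + M * ∑ i, s (Sum.inr i) := by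
  simp [Finsupp.linearCombination_apply, Finsupp.sum_fintype, Fintype.sum_sum_type, toricExponent,
    Finsupp.single_apply, mul_comm, Finset.mul_sum]

theorem injOn_linearCombination_toricExponent (hN : 0 < N) (hMN : M.Coprime N) :
    Set.InjOn (linearCombination ℕ (toricExponent N M m)) (reducedExponents N m) := by
  intro s hs s' hs' h
  have hcast : ∀ i : Fin m, s (Sum.inl i.castSucc) = s' (Sum.inl i.castSucc) ∧
      s (Sum.inr i) = s' (Sum.inr i) := fun i => by
    have hi := DFunLike.congr_fun h i.castSucc
    rw [linearCombination_toricExponent_castSucc, linearCombination_toricExponent_castSucc] at hi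
    have hy := Nat.eq_of_mul_add_mul_eq_of_coprime hMN (hs i) (hs' i) hi
    rw [hy] at hi
    exact ⟨Nat.eq_of_mul_eq_mul_left hN (by omega), hy⟩
  have hlast : s (Sum.inl (Fin.last m)) = s' (Sum.inl (Fin.last m)) := by
    have hl := DFunLike.congr_fun h (Fin.last m)
    rw [linearCombination_toricExponent_last, linearCombination_toricExponent_last,
      Fintype.sum_congr _ _ fun i => (hcast i).2] at hl
    exact Nat.eq_of_mul_eq_mul_left hN (by omega)
  ext (j | i)
  · induction j using Fin.lastCases with
    | last => exact hlast
    | cast i => exact (hcast i).1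
  · exact (hcast i).2

variable (N) in
noncomputable def reduceExponent (s : (Fin (m + 1) ⊕ Fin m) →₀ ℕ) :
    (Fin (m + 1) ⊕ Fin m) →₀ ℕ :=
  Finsupp.equivFunOnFinite.symm (Sum.elim (fun j => s (Sum.inl j)) (fun i => s (Sum.inr i) % N))

theorem reduceExponent_add_sum (s : (Fin (m + 1) ⊕ Fin m) →₀ ℕ) :
    reduceExponent N s + ∑ i, (s (Sum.inr i) / N) • single (Sum.inr i) N = s := by
  ext (j | i) <;> simp [reduceExponent, Finsupp.single_apply, Nat.mod_add_div']

theorem exists_reduced_monomial_sub_mem (hN : 0 < N) (s : (Fin (m + 1) ⊕ Fin m) →₀ ℕ) :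
    ∃ s' ∈ reducedExponents N m,
      monomial s (1 : K) - monomial s' 1 ∈ binomialIdeal K N M m := by
  refine ⟨reduceExponent N s + ∑ i, (s (Sum.inr i) / N) •
    (single (Sum.inl i.castSucc) M + single (Sum.inl (Fin.last m)) M), fun i => ?_, ?_⟩
  · simp [reduceExponent, Nat.mod_lt _ hN]
  · have hgen : ∀ i, monomial (single (Sum.inr i) N) (1 : K) -
        monomial (single (Sum.inl i.castSucc) M + single (Sum.inl (Fin.last m)) M) 1 ∈
          binomialIdeal K N M m := fun i =>
      Ideal.subset_span ⟨i, by simp [X_pow_eq_monomial, monomial_mul]⟩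
    have h := monomial_add_sum_nsmul_sub_mem _ _ hgen (reduceExponent N s)
      (fun i => s (Sum.inr i) / N) Finset.univ
    rwa [reduceExponent_add_sum] at h

theorem ker_toricHom (hN : 0 < N) (hMN : M.Coprime N) :
    RingHom.ker (toricHom K N M m) = binomialIdeal K N M m := by
  refine le_antisymm (fun p hp => ?_) binomialIdeal_le_ker
  obtain ⟨q, hq, hpq⟩ := exists_sub_mem_restrictSupport (exists_reduced_monomial_sub_mem hN) p
  have hq0 : q = 0 := by
    refine eq_zero_of_aeval_monomial_eq_zero _ (injOn_linearCombination_toricExponent hN hMN) hq ?_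
    have hψ := binomialIdeal_le_ker (M := M) hpq
    rwa [RingHom.mem_ker, map_sub, RingHom.mem_ker.mp hp, zero_sub, neg_eq_zero] at hψ
  simpa [hq0] using hpq

end ToricKernel

/-- In the setting of the paper (`n ≥ 3`, coprime `f > g > 0`,
`(n-1)f ≤ ng`), the part of `ker φ` lying in the subring `K[x₁,…,xₙ,y₁,…,y_{n-1}]` (not
involving `yₙ`) is the ideal generated by `F₁, …, F_{n-1}`: pulling `ker φ` back along the
inclusion `K[x₁,…,xₙ,y₁,…,y_{n-1}] ↪ K[x₁,…,xₙ,y₁,…,yₙ]` gives `(F₁, …, F_{n-1})`. -/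
theorem stmt14 (n : ℕ) (hn : 3 ≤ n) (f g : ℕ) (hco : Nat.Coprime f g)
    (hg : 0 < g) (hgf : g < f)
    (K : Type*) [Field K]
    (φ : MvPolynomial (Fin n ⊕ Fin n) K →ₐ[K] MvPolynomial (Fin n) K)
    (hφx : ∀ i : Fin n, φ (X (Sum.inl i)) = X i ^ (f * g))
    (hφy : ∀ i : Fin (n - 1), φ (X (Sum.inr (Fin.castLE (by omega) i))) =
      X (Fin.castLE (by omega) i : Fin n) ^ (f - g) * X (⟨n - 1, by omega⟩ : Fin n) ^ (f - g)) :
    Ideal.comap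
        (rename (Sum.map (id : Fin n → Fin n) (Fin.castLE (by omega : n - 1 ≤ n))) :
          MvPolynomial (Fin n ⊕ Fin (n - 1)) K →ₐ[K] MvPolynomial (Fin n ⊕ Fin n) K)
        (RingHom.ker φ) =
      Ideal.span (Set.range fun i : Fin (n - 1) =>
        (X (Sum.inr i) ^ (f * g) -
          X (Sum.inl (Fin.castLE (by omega) i : Fin n)) ^ (f - g) *
            X (Sum.inl (⟨n - 1, by omega⟩ : Fin n)) ^ (f - g) :
          MvPolynomial (Fin n ⊕ Fin (n - 1)) K)) := by
  obtain ⟨m, rfl⟩ : ∃ m, n = m + 1 := ⟨n - 1, by omega⟩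
  have hφ : φ.comp (rename (Sum.map id (Fin.castLE (by omega)))) =
      ToricKernel.toricHom K (f * g) (f - g) m := by
    refine algHom_ext fun v => ?_
    rw [AlgHom.comp_apply, rename_X]
    rcases v with j | i
    · exact (hφx j).trans (ToricKernel.toricHom_X_inl j).symm
    · exact (hφy i).trans (ToricKernel.toricHom_X_inr i).symm
  have hMN : (f - g).Coprime (f * g) :=
    ((Nat.coprime_self_sub_left hgf.le).mpr hco.symm).mul_right
      ((Nat.coprime_sub_self_left hgf.le).mpr hco)
  rw [AlgHom.comap_ker, hφ, ToricKernel.ker_toricHom (Nat.mul_pos (by omega) hg) hMN]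
  rfl
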